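/- (Beznosova's Little Lemma.) Let w be a weight on ℝ such that w^{-1} is also a weight (i.e., both w and w^{-1} are locally integrable and positive a.e.). Let {λ_I}_{I∈D} be a Carleson sequence with intensity A, i.e., ∑_{I∈D(J)} λ_I ≤ A|J| for all J ∈ D. Then for every J ∈ D, ∑_{I∈D(J)} λ_I / ⟨w^{-1}⟩_I ≤ 4A · w(J); that is, {λ_I/⟨w^{-1}⟩_I}_{I∈D} is a w-Carleson sequence with intensity 4A. -/

import Mathlib

/-!
Bellman function argument. For `J ∈ D` let `u_J = ⟨w⟩_J`, `v_J = ⟨w⁻¹⟩_J`, and let `ℓ_J` be the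
sum of `λ_I` over the first `n` generations of `D(J)`, divided by `A |J|`. Then `u_J v_J ≥ 1`
(Cauchy–Schwarz) and `0 ≤ ℓ_J ≤ 1` (Carleson condition). On this domain
`B(u, v, ℓ) = u - 1 / (v (1 + ℓ))` satisfies `0 ≤ B ≤ u` and, as `(v, ℓ) ↦ 1 / (v (1 + ℓ))` is
convex and drops by at least `Δ / (4 v)` when `ℓ ≤ 1` grows by `Δ`,
`B(x_J) ≥ (B(x_{J₋}) + B(x_{J₊})) / 2 + λ_J / (4 A |J| v_J)`
when the children carry one generation fewer. Telescoping gives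
`∑ λ_I / v_I ≤ 4 A |J| B(x_J) ≤ 4 A w(J)` for every `n`, and the sum over `D(J)` is the supremum
over `n` of these partial sums.
-/

open MeasureTheory ENNReal

noncomputable section

/-- Average of `f` over a set `I ⊆ ℝ` with respect to Lebesgue measure. -/
def iAvg (I : Set ℝ) (f : ℝ → ℝ) : ℝ :=
  (volume I).toReal⁻¹ * ∫ x in I, f x

/-- A weight on `ℝ`: locally integrable and a.e. positive. -/
def IsWeight1 (w : ℝ → ℝ) : Prop :=
  MeasureTheory.LocallyIntegrable w volume ∧ ∀ᵐ x : ℝ, 0 < w x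

/-- The standard dyadic interval `[k 2^{-j}, (k+1) 2^{-j})`. -/
def dyadInt (j k : ℤ) : Set ℝ :=
  Set.Ico ((k : ℝ) * (2:ℝ) ^ (-j)) (((k : ℝ) + 1) * (2:ℝ) ^ (-j))

lemma dyadInt_left_lt_right (j k : ℤ) : (k : ℝ) * 2 ^ (-j) < ((k : ℝ) + 1) * 2 ^ (-j) := by
  gcongr; linarith

lemma dyadInt_nonempty (j k : ℤ) : (dyadInt j k).Nonempty :=
  Set.nonempty_Ico.2 (dyadInt_left_lt_right j k)

lemma volume_dyadInt (j k : ℤ) : volume (dyadInt j k) = ENNReal.ofReal (2 ^ (-j)) := by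
  rw [dyadInt, Real.volume_Ico]; ring_nf

lemma volume_dyadInt_toReal (j k : ℤ) : (volume (dyadInt j k)).toReal = 2 ^ (-j) := by
  rw [volume_dyadInt, ENNReal.toReal_ofReal (by positivity)]

lemma two_zpow_neg_eq_two_mul (j : ℤ) : (2 : ℝ) ^ (-j) = 2 * 2 ^ (-(j + 1)) := by
  rw [neg_add, zpow_add₀ two_ne_zero]; ring

lemma dyadInt_union_children (j k : ℤ) :
    dyadInt (j + 1) (2 * k) ∪ dyadInt (j + 1) (2 * k + 1) = dyadInt j k := by
  simp only [dyadInt, Int.cast_add, Int.cast_mul, Int.cast_ofNat, Int.cast_one,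
    two_zpow_neg_eq_two_mul j]
  have h : (0 : ℝ) < 2 ^ (-(j + 1)) := by positivity
  rw [Set.Ico_union_Ico_eq_Ico (by nlinarith) (by nlinarith)]
  ring_nf

lemma disjoint_dyadInt_children (j k : ℤ) :
    Disjoint (dyadInt (j + 1) (2 * k)) (dyadInt (j + 1) (2 * k + 1)) := by
  rw [dyadInt, dyadInt, show ((2 * k : ℤ) : ℝ) + 1 = ((2 * k + 1 : ℤ) : ℝ) by push_cast; ring]
  exact Set.Ico_disjoint_Ico_same

lemma le_of_dyadInt_subset {a b j k : ℤ} (h : dyadInt a b ⊆ dyadInt j k) : j ≤ a := by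
  have := measure_mono (μ := volume) h
  rw [volume_dyadInt, volume_dyadInt, ENNReal.ofReal_le_ofReal_iff (by positivity),
    zpow_le_zpow_iff_right₀ (one_lt_two : (1 : ℝ) < 2)] at this
  omega

lemma dyadInt_subset_of_left_mem {a b j k : ℤ} (hja : j ≤ a)
    (h : (b : ℝ) * 2 ^ (-a) ∈ dyadInt j k) : dyadInt a b ⊆ dyadInt j k := by
  obtain ⟨e, rfl⟩ : ∃ e : ℕ, a = j + e := ⟨(a - j).toNat, by omega⟩
  have hscale : (2 : ℝ) ^ (-j) = 2 ^ e * 2 ^ (-(j + e)) := by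
    rw [← zpow_natCast, ← zpow_add₀ two_ne_zero]; ring_nf
  have hpos : (0 : ℝ) < 2 ^ (-(j + e)) := by positivity
  obtain ⟨hl, hr⟩ := h
  rw [hscale] at hr
  have hb : (b : ℝ) + 1 ≤ (k + 1) * 2 ^ e := by
    have : (b : ℝ) < (k + 1) * 2 ^ e := by nlinarith
    exact_mod_cast (show b < (k + 1) * 2 ^ e by exact_mod_cast this)
  refine Set.Ico_subset_Ico hl ?_
  rw [hscale]; nlinarith

lemma dyadInt_subset_trichotomy {a b j k : ℤ} (h : dyadInt a b ⊆ dyadInt j k) :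
    (a, b) = (j, k) ∨ dyadInt a b ⊆ dyadInt (j + 1) (2 * k) ∨
      dyadInt a b ⊆ dyadInt (j + 1) (2 * k + 1) := by
  rcases (le_of_dyadInt_subset h).eq_or_lt with rfl | hlt
  · obtain ⟨hl, hr⟩ := (Set.Ico_subset_Ico_iff (dyadInt_left_lt_right j b)).1 h
    have hpos : (0 : ℝ) < 2 ^ (-j) := by positivity
    have hkb : (k : ℝ) ≤ b := le_of_mul_le_mul_right hl hpos
    have hbk : (b : ℝ) ≤ k := by linarith [le_of_mul_le_mul_right hr hpos]
    left; congr; exact_mod_cast le_antisymm hbk hkb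
  · have hmem := h (Set.left_mem_Ico.2 (dyadInt_left_lt_right a b))
    rw [← dyadInt_union_children] at hmem
    right
    exact hmem.imp (dyadInt_subset_of_left_mem hlt) (dyadInt_subset_of_left_mem hlt)

/-- `dyadSubtree n j k` indexes the intervals of `D(dyadInt j k)` of generation less than `n`
relative to `dyadInt j k`. -/
def dyadSubtree : ℕ → ℤ → ℤ → Finset (ℤ × ℤ)
  | 0, _, _ => ∅
  | n + 1, j, k =>
    insert (j, k) (dyadSubtree n (j + 1) (2 * k) ∪ dyadSubtree n (j + 1) (2 * k + 1))

lemma subset_of_mem_dyadSubtree {n : ℕ} {j k : ℤ} {p : ℤ × ℤ} (hp : p ∈ dyadSubtree n j k) :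
    dyadInt p.1 p.2 ⊆ dyadInt j k := by
  induction n generalizing j k with
  | zero => simp [dyadSubtree] at hp
  | succ n ih =>
    rcases Finset.mem_insert.1 hp with rfl | hp
    · exact subset_rfl
    rw [← dyadInt_union_children j k]
    rcases Finset.mem_union.1 hp with hp | hp
    · exact (ih hp).trans Set.subset_union_left
    · exact (ih hp).trans Set.subset_union_right

lemma mem_dyadSubtree_of_subset {n : ℕ} {a b j k : ℤ} (h : dyadInt a b ⊆ dyadInt j k)
    (ha : a < j + n) : (a, b) ∈ dyadSubtree n j k := by
  induction n generalizing j k with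
  | zero => have := le_of_dyadInt_subset h; omega
  | succ n ih =>
    simp only [dyadSubtree, Finset.mem_insert, Finset.mem_union]
    rcases dyadInt_subset_trichotomy h with h | h | h
    · exact .inl h
    · exact .inr (.inl (ih h (by omega)))
    · exact .inr (.inr (ih h (by omega)))

lemma sum_dyadSubtree_succ {M : Type*} [AddCommMonoid M] (g : ℤ × ℤ → M) (n : ℕ) (j k : ℤ) :
    ∑ p ∈ dyadSubtree (n + 1) j k, g p =
      g (j, k) + ∑ p ∈ dyadSubtree n (j + 1) (2 * k), g p
        + ∑ p ∈ dyadSubtree n (j + 1) (2 * k + 1), g p := by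
  have hdisj : Disjoint (dyadSubtree n (j + 1) (2 * k)) (dyadSubtree n (j + 1) (2 * k + 1)) :=
    Finset.disjoint_left.2 fun p hl hr => by
      obtain ⟨x, hx⟩ := dyadInt_nonempty p.1 p.2
      exact Set.disjoint_left.1 (disjoint_dyadInt_children j k)
        (subset_of_mem_dyadSubtree hl hx) (subset_of_mem_dyadSubtree hr hx)
  have hroot : (j, k) ∉ dyadSubtree n (j + 1) (2 * k) ∪ dyadSubtree n (j + 1) (2 * k + 1) := by
    intro hp
    rcases Finset.mem_union.1 hp with hp | hp <;>
      · have := le_of_dyadInt_subset (subset_of_mem_dyadSubtree hp); omega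
  rw [dyadSubtree, Finset.sum_insert hroot, Finset.sum_union hdisj, add_assoc]

lemma tsum_dyadic_eq_iSup_sum (g : ℤ × ℤ → ℝ≥0∞) (j k : ℤ) :
    ∑' q : {p : ℤ × ℤ // dyadInt p.1 p.2 ⊆ dyadInt j k}, g q.1 =
      ⨆ n, ∑ p ∈ dyadSubtree n j k, g p := by
  classical
  let P : ℤ × ℤ → Prop := fun p => dyadInt p.1 p.2 ⊆ dyadInt j k
  have hsum (n : ℕ) : ∑ q ∈ (dyadSubtree n j k).subtype P, g q.1 = ∑ p ∈ dyadSubtree n j k, g p :=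
    Finset.sum_subtype_of_mem g fun _ => subset_of_mem_dyadSubtree
  simp_rw [← hsum]
  refine ENNReal.tsum_eq_iSup_sum' _ fun t =>
    ⟨t.sup (fun q : Subtype P => (q.1.1 - j).toNat) + 1, ?_⟩
  rintro ⟨⟨a, b⟩, hab⟩ hq
  rw [Finset.mem_subtype]
  refine mem_dyadSubtree_of_subset hab ?_
  have hsup := Finset.le_sup (f := fun q : Subtype P => (q.1.1 - j).toNat) hq
  have := le_of_dyadInt_subset hab
  simp only at hsup ⊢
  omega

section Integrals

variable {α : Type*} [MeasurableSpace α] {μ : Measure α} {f : α → ℝ}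

lemma integral_pos_of_ae_pos (hf : ∀ᵐ x ∂μ, 0 < f x) (hfi : Integrable f μ) (hμ : μ ≠ 0) :
    0 < ∫ x, f x ∂μ := by
  rw [integral_pos_iff_support_of_nonneg_ae (hf.mono fun _ hx => hx.le) hfi]
  have hsupp : Function.support f =ᵐ[μ] Set.univ := ae_eq_univ.2 <|
    measure_mono_null (fun x hx => by simp [Function.notMem_support.1 hx]) (ae_iff.1 hf)
  rw [measure_congr hsupp]
  exact Measure.measure_univ_pos.2 hμ

lemma sq_measureReal_univ_le_integral_mul_integral_inv [IsFiniteMeasure μ]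
    (hf : ∀ᵐ x ∂μ, 0 < f x) (hfi : Integrable f μ) (hfi' : Integrable (fun x => (f x)⁻¹) μ) :
    μ.real Set.univ ^ 2 ≤ (∫ x, f x ∂μ) * ∫ x, (f x)⁻¹ ∂μ := by
  set m := μ.real Set.univ
  set X := ∫ x, f x ∂μ
  set Y := ∫ x, (f x)⁻¹ ∂μ
  have hY : 0 ≤ Y := integral_nonneg_of_ae (hf.mono fun _ hx => (inv_pos.2 hx).le)
  rcases (measureReal_nonneg : 0 ≤ m).eq_or_lt with hm | hm
  · rw [show m = 0 from hm.symm, sq, zero_mul]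
    exact mul_nonneg (integral_nonneg_of_ae (hf.mono fun _ hx => hx.le)) hY
  have hX : 0 < X := integral_pos_of_ae_pos hf hfi (by rintro rfl; simp at hm)
  -- `2 ≤ a + a⁻¹` with `a = t f`, integrated; `t = m / X` then gives `m² ≤ X Y`
  have hamgm (t : ℝ) (ht : 0 < t) : 2 * m ≤ t * X + t⁻¹ * Y := by
    have hpt : ∀ᵐ x ∂μ, 2 ≤ t * f x + t⁻¹ * (f x)⁻¹ := hf.mono fun x hx => by
      have ha : 0 < t * f x := mul_pos ht hx
      rw [← mul_inv, ← sub_nonneg,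
        show t * f x + (t * f x)⁻¹ - 2 = (t * f x - 1) ^ 2 / (t * f x) by field_simp; ring]
      positivity
    have hint : Integrable (fun x => t * f x + t⁻¹ * (f x)⁻¹) μ :=
      (hfi.const_mul t).add (hfi'.const_mul t⁻¹)
    have := integral_mono_ae (integrable_const 2) hint hpt
    rwa [integral_const, integral_add (hfi.const_mul t) (hfi'.const_mul t⁻¹), integral_const_mul,
      integral_const_mul, smul_eq_mul, mul_comm] at this
  have h := hamgm (m / X) (by positivity)
  rw [div_mul_cancel₀ _ hX.ne', inv_div, div_mul_eq_mul_div] at h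
  have : m * m ≤ X * Y := (le_div_iff₀ hm).1 (by linarith)
  rwa [sq]

end Integrals

section DyadicAverages

variable {f : ℝ → ℝ}

lemma integrableOn_dyadInt (hf : LocallyIntegrable f volume) (j k : ℤ) :
    IntegrableOn f (dyadInt j k) :=
  (hf.integrableOn_isCompact isCompact_Icc).mono_set Set.Ico_subset_Icc_self

lemma setIntegral_dyadInt_eq_add (hf : LocallyIntegrable f volume) (j k : ℤ) :
    ∫ x in dyadInt j k, f x =
      (∫ x in dyadInt (j + 1) (2 * k), f x) + ∫ x in dyadInt (j + 1) (2 * k + 1), f x := by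
  rw [← dyadInt_union_children j k, setIntegral_union (disjoint_dyadInt_children j k)
    measurableSet_Ico (integrableOn_dyadInt hf _ _) (integrableOn_dyadInt hf _ _)]

lemma iAvg_dyadInt (j k : ℤ) : iAvg (dyadInt j k) f = (∫ x in dyadInt j k, f x) / 2 ^ (-j) := by
  rw [iAvg, volume_dyadInt_toReal, inv_mul_eq_div]

lemma iAvg_dyadInt_pos (hf : LocallyIntegrable f volume) (hpos : ∀ᵐ x, 0 < f x) (j k : ℤ) :
    0 < iAvg (dyadInt j k) f := by
  rw [iAvg_dyadInt]
  refine div_pos (integral_pos_of_ae_pos (ae_restrict_of_ae hpos) (integrableOn_dyadInt hf j k) ?_)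
    (by positivity)
  rw [Ne, Measure.restrict_eq_zero, volume_dyadInt]
  simp only [ENNReal.ofReal_eq_zero, not_le]; positivity

lemma iAvg_dyadInt_eq_average_children (hf : LocallyIntegrable f volume) (j k : ℤ) :
    iAvg (dyadInt j k) f =
      (iAvg (dyadInt (j + 1) (2 * k)) f + iAvg (dyadInt (j + 1) (2 * k + 1)) f) / 2 := by
  rw [iAvg_dyadInt, iAvg_dyadInt, iAvg_dyadInt, setIntegral_dyadInt_eq_add hf,
    two_zpow_neg_eq_two_mul j]
  field_simp

lemma two_zpow_neg_div_iAvg_inv_le (hf : IsWeight1 f)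
    (hf' : LocallyIntegrable (fun x => (f x)⁻¹) volume) (j k : ℤ) :
    2 ^ (-j) / iAvg (dyadInt j k) (fun x => (f x)⁻¹) ≤ ∫ x in dyadInt j k, f x := by
  have : IsFiniteMeasure (volume.restrict (dyadInt j k)) :=
    isFiniteMeasure_restrict.2 (by simp [volume_dyadInt])
  have hcs := sq_measureReal_univ_le_integral_mul_integral_inv (μ := volume.restrict (dyadInt j k))
    (ae_restrict_of_ae hf.2) (integrableOn_dyadInt hf.1 j k) (integrableOn_dyadInt hf' j k)
  rw [measureReal_restrict_apply_univ, measureReal_def, volume_dyadInt_toReal] at hcs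
  have hV := iAvg_dyadInt_pos hf' (hf.2.mono fun _ hx => inv_pos.2 hx) j k
  rw [div_le_iff₀ hV, iAvg_dyadInt, mul_div_assoc']
  rw [le_div_iff₀ (by positivity)]
  nlinarith

end DyadicAverages

lemma one_div_midpoint_mul_midpoint_le {a b x y : ℝ} (ha : 0 < a) (hb : 0 < b) (hx : 0 < x)
    (hy : 0 < y) : 1 / ((a + b) / 2 * ((x + y) / 2)) ≤ (1 / (a * x) + 1 / (b * y)) / 2 := by
  rw [div_add_div _ _ (by positivity) (by positivity), div_div, div_le_div_iff₀ (by positivity)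
    (by positivity)]
  nlinarith [sq_nonneg (a * x - b * y), mul_nonneg (mul_nonneg ha.le hb.le) (sq_nonneg (x - y)),
    mul_nonneg (mul_nonneg hx.le hy.le) (sq_nonneg (a - b))]

/-- The main inequality for the Bellman function `B(u, v, ℓ) = u - 1 / (v (1 + ℓ))` on the
domain `u v ≥ 1`, `0 ≤ ℓ ≤ 1`: it is midpoint concave, with a gain of `Δ / (4 v)` when `ℓ`
jumps by `Δ`. -/
lemma bellman_main_inequality {v₁ v₂ ℓ₁ ℓ₂ Δ : ℝ} (hv₁ : 0 < v₁) (hv₂ : 0 < v₂) (hℓ₁ : 0 ≤ ℓ₁)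
    (hℓ₂ : 0 ≤ ℓ₂) (hΔ : 0 ≤ Δ) (hle : Δ + (ℓ₁ + ℓ₂) / 2 ≤ 1) :
    Δ / (4 * ((v₁ + v₂) / 2)) + 1 / ((v₁ + v₂) / 2 * (1 + (Δ + (ℓ₁ + ℓ₂) / 2)))
      ≤ (1 / (v₁ * (1 + ℓ₁)) + 1 / (v₂ * (1 + ℓ₂))) / 2 := by
  set v := (v₁ + v₂) / 2
  set s := ((1 + ℓ₁) + (1 + ℓ₂)) / 2 with hs_def
  have hconv : 1 / (v * s) ≤ (1 / (v₁ * (1 + ℓ₁)) + 1 / (v₂ * (1 + ℓ₂))) / 2 :=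
    one_div_midpoint_mul_midpoint_le hv₁ hv₂ (by linarith) (by linarith)
  have hv : 0 < v := by positivity
  have hs : 1 ≤ s := by linarith
  have hsΔ : 1 + (Δ + (ℓ₁ + ℓ₂) / 2) = s + Δ := by rw [hs_def]; ring
  have hgain : Δ / (4 * v) + 1 / (v * (s + Δ)) ≤ 1 / (v * s) := by
    rw [div_add_div _ _ (by positivity) (by positivity), div_le_div_iff₀ (by positivity)
      (by positivity)]
    have : s * (s + Δ) ≤ 4 := by nlinarith [hsΔ]
    nlinarith [mul_pos hv hv, mul_nonneg hΔ (sub_nonneg.2 this)]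
  rw [hsΔ]
  exact hgain.trans hconv

/-- One generation of the Bellman induction: `S`, `L`, `v`, `W` stand for the partial sum of
`λ_I / ⟨w⁻¹⟩_I`, the partial sum of `λ_I`, `⟨w⁻¹⟩` and `w` on the two children of length `m`,
and `lam` for `λ` of the parent. -/
lemma bellman_step {A m lam S₁ S₂ L₁ L₂ v₁ v₂ W₁ W₂ : ℝ} (hA : 0 < A) (hm : 0 < m)
    (hlam : 0 ≤ lam) (hL₁ : 0 ≤ L₁) (hL₂ : 0 ≤ L₂) (hv₁ : 0 < v₁) (hv₂ : 0 < v₂)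
    (hC : lam + L₁ + L₂ ≤ A * (2 * m))
    (h₁ : S₁ + 4 * A * m / (v₁ * (1 + L₁ / (A * m))) ≤ 4 * A * W₁)
    (h₂ : S₂ + 4 * A * m / (v₂ * (1 + L₂ / (A * m))) ≤ 4 * A * W₂) :
    lam / ((v₁ + v₂) / 2) + S₁ + S₂
      + 4 * A * (2 * m) / ((v₁ + v₂) / 2 * (1 + (lam + L₁ + L₂) / (A * (2 * m))))
      ≤ 4 * A * (W₁ + W₂) := by
  have hsplit : (lam + L₁ + L₂) / (A * (2 * m)) =
      lam / (A * (2 * m)) + (L₁ / (A * m) + L₂ / (A * m)) / 2 := by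
    field_simp; ring
  have hmain := bellman_main_inequality (Δ := lam / (A * (2 * m))) (ℓ₁ := L₁ / (A * m))
    (ℓ₂ := L₂ / (A * m)) hv₁ hv₂ (by positivity) (by positivity)
    (by positivity) (by rw [← hsplit, div_le_one (by positivity)]; exact hC)
  rw [← hsplit] at hmain
  have hscaled := mul_le_mul_of_nonneg_left hmain (by positivity : (0 : ℝ) ≤ 4 * A * (2 * m))
  have e₀ : 4 * A * (2 * m) * (lam / (A * (2 * m)) / (4 * ((v₁ + v₂) / 2))) =
      lam / ((v₁ + v₂) / 2) := by
    field_simp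
  have e₁ : 4 * A * (2 * m) *
      ((1 / (v₁ * (1 + L₁ / (A * m))) + 1 / (v₂ * (1 + L₂ / (A * m)))) / 2) =
      4 * A * m / (v₁ * (1 + L₁ / (A * m))) + 4 * A * m / (v₂ * (1 + L₂ / (A * m))) := by
    ring
  rw [mul_add, e₀, e₁, mul_one_div] at hscaled
  linarith

section Bellman

variable {w : ℝ → ℝ} {lam : ℤ × ℤ → ℝ} {A : ℝ}

lemma sum_dyadSubtree_le_of_carleson (hlam : ∀ p, 0 ≤ lam p) (hA : 0 ≤ A)
    (hCarleson : ∀ j k : ℤ,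
      ∑' q : {p : ℤ × ℤ // dyadInt p.1 p.2 ⊆ dyadInt j k}, ENNReal.ofReal (lam q.1)
        ≤ ENNReal.ofReal (A * (volume (dyadInt j k)).toReal))
    (n : ℕ) (j k : ℤ) : ∑ p ∈ dyadSubtree n j k, lam p ≤ A * 2 ^ (-j) := by
  have h := (le_iSup (fun n => ∑ p ∈ dyadSubtree n j k, ENNReal.ofReal (lam p)) n).trans
    ((tsum_dyadic_eq_iSup_sum _ j k).symm.le.trans (hCarleson j k))
  rwa [← ENNReal.ofReal_sum_of_nonneg fun p _ => hlam p, volume_dyadInt_toReal,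
    ENNReal.ofReal_le_ofReal_iff (by positivity)] at h

lemma sum_dyadSubtree_add_bellman_le (hw : IsWeight1 w)
    (hw' : LocallyIntegrable (fun x => (w x)⁻¹) volume) (hlam : ∀ p, 0 ≤ lam p) (hA : 0 < A)
    (hC : ∀ n j k, ∑ p ∈ dyadSubtree n j k, lam p ≤ A * 2 ^ (-j)) (n : ℕ) (j k : ℤ) :
    ∑ p ∈ dyadSubtree n j k, lam p / iAvg (dyadInt p.1 p.2) (fun x => (w x)⁻¹)
      + 4 * A * 2 ^ (-j) / (iAvg (dyadInt j k) (fun x => (w x)⁻¹)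
          * (1 + (∑ p ∈ dyadSubtree n j k, lam p) / (A * 2 ^ (-j))))
      ≤ 4 * A * ∫ x in dyadInt j k, w x := by
  have hv := iAvg_dyadInt_pos hw' (hw.2.mono fun _ hx => inv_pos.2 hx)
  induction n generalizing j k with
  | zero =>
    simp only [dyadSubtree, Finset.sum_empty, zero_div, add_zero, mul_one, zero_add, mul_div_assoc]
    gcongr
    exact two_zpow_neg_div_iAvg_inv_le hw hw' j k
  | succ n ih =>
    rw [sum_dyadSubtree_succ, sum_dyadSubtree_succ, iAvg_dyadInt_eq_average_children hw' j k,
      setIntegral_dyadInt_eq_add hw.1, two_zpow_neg_eq_two_mul j]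
    have hC' := hC (n + 1) j k
    rw [sum_dyadSubtree_succ, two_zpow_neg_eq_two_mul j] at hC'
    exact bellman_step hA (by positivity) (hlam _)
      (Finset.sum_nonneg fun p _ => hlam p) (Finset.sum_nonneg fun p _ => hlam p)
      (hv _ _) (hv _ _) hC' (ih _ _) (ih _ _)

end Bellman

/-- **Beznosova's Little Lemma.** If `w` and `w⁻¹` are weights and
`{λ_I}_{I∈D}` is a Carleson sequence with intensity `A` (with respect to Lebesgue measure),
then `{λ_I / ⟨w⁻¹⟩_I}_{I∈D}` is a `w`-Carleson sequence with intensity `4A`: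
`∑_{I ∈ D(J)} λ_I / ⟨w⁻¹⟩_I ≤ 4 A w(J)` for every `J ∈ D`. -/
theorem beznosova_little_lemma (w : ℝ → ℝ) (hw : IsWeight1 w)
    (hw' : IsWeight1 (fun x => (w x)⁻¹))
    (lam : ℤ × ℤ → ℝ) (hlam : ∀ p, 0 ≤ lam p) (A : ℝ) (hA : 0 < A)
    (hCarleson : ∀ j k : ℤ,
      ∑' q : {p : ℤ × ℤ // dyadInt p.1 p.2 ⊆ dyadInt j k}, ENNReal.ofReal (lam q.1)
        ≤ ENNReal.ofReal (A * (volume (dyadInt j k)).toReal)) :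
    ∀ j k : ℤ,
      ∑' q : {p : ℤ × ℤ // dyadInt p.1 p.2 ⊆ dyadInt j k},
          ENNReal.ofReal (lam q.1 / iAvg (dyadInt q.1.1 q.1.2) (fun x => (w x)⁻¹))
        ≤ ENNReal.ofReal (4 * A * ∫ x in dyadInt j k, w x) := by
  intro j k
  have hv := iAvg_dyadInt_pos hw'.1 (hw.2.mono fun _ hx => inv_pos.2 hx)
  have hC := sum_dyadSubtree_le_of_carleson hlam hA.le hCarleson
  rw [tsum_dyadic_eq_iSup_sum
    (fun p => ENNReal.ofReal (lam p / iAvg (dyadInt p.1 p.2) fun x => (w x)⁻¹))]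
  refine iSup_le fun n => ?_
  rw [← ENNReal.ofReal_sum_of_nonneg fun p _ => div_nonneg (hlam p) (hv p.1 p.2).le]
  refine ENNReal.ofReal_le_ofReal (le_of_add_le_of_nonneg_left
    (sum_dyadSubtree_add_bellman_le hw hw'.1 hlam hA hC n j k) ?_)
  have hL : 0 ≤ ∑ p ∈ dyadSubtree n j k, lam p := Finset.sum_nonneg fun p _ => hlam p
  have := hv j k
  positivity

end
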